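/- Let ε > 0 and b₀ ≥ 0, and set s₂(x,t) := t² s(x,t). Then for every x ∈ ℝ and t > 0, writing u := x/(2√(ε t)), the fourth spatial derivative of s₂ satisfies ε² ∂ₓ⁴ s₂(x,t) = (e^{−b₀ t}/√π) · ((3/2) u − u³) · e^{−u²}. -/

import Mathlib

/-- The error function `erf z = (2/√π) ∫₀^z e^{-r²} dr`. -/
noncomputable def erf (z : ℝ) : ℝ :=
  2 / Real.sqrt Real.pi * ∫ r in (0:ℝ)..z, Real.exp (-r ^ 2)

/-- The singular function `s(x,t) = e^{-b₀ t} erf(x/(2√(ε t)))`. -/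
noncomputable def s (ε b₀ x t : ℝ) : ℝ :=
  Real.exp (-b₀ * t) * erf (x / (2 * Real.sqrt (ε * t)))

/-- `s₂(x,t) := t² s(x,t)`. -/
noncomputable def s₂ (ε b₀ x t : ℝ) : ℝ := t ^ 2 * s ε b₀ x t

lemma hasDerivAt_erf' (z : ℝ) :
    HasDerivAt erf (2 / Real.sqrt Real.pi * Real.exp (-z ^ 2)) z := by
  have hcont : Continuous fun r : ℝ => Real.exp (-r ^ 2) := by continuity
  have h := (hcont.integral_hasStrictDerivAt 0 z).hasDerivAt
  exact h.const_mul (2 / Real.sqrt Real.pi)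

lemma hd_exp (c ξ : ℝ) (hc : c ≠ 0) :
    HasDerivAt (fun ξ : ℝ => Real.exp (-(ξ / c) ^ 2))
      (Real.exp (-(ξ / c) ^ 2) * (-2 * ξ / c ^ 2)) ξ := by
  have h1 : HasDerivAt (fun ξ : ℝ => -(ξ / c) ^ 2) (-(2 * (ξ / c) ^ 1 * (1 / c))) ξ := by
    have := (((hasDerivAt_id ξ).div_const c).pow 2).neg
    exact this.congr_deriv (by simp)
  have h2 := (Real.hasDerivAt_exp (-(ξ / c) ^ 2)).comp ξ h1
  have hscal : Real.exp (-(ξ / c) ^ 2) * (-2 * ξ / c ^ 2)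
      = Real.exp (-(ξ / c) ^ 2) * -(2 * (ξ / c) ^ 1 * (1 / c)) := by
    rw [pow_one]
    congr 1
    ring
  rw [hscal]
  exact h2

/-- For every `x ∈ ℝ` and `t > 0`, writing `u := x/(2√(ε t))`,
`ε² ∂ₓ⁴ s₂(x,t) = (e^{−b₀ t}/√π) ((3/2) u − u³) e^{−u²}`. -/
theorem s₂_fourth_spatial_derivative (ε b₀ : ℝ) (hε : 0 < ε) (hb : 0 ≤ b₀)
    (x t : ℝ) (ht : 0 < t) :
    ε ^ 2 * iteratedDeriv 4 (fun ξ => s₂ ε b₀ ξ t) x =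
      Real.exp (-b₀ * t) / Real.sqrt Real.pi *
        (3 / 2 * (x / (2 * Real.sqrt (ε * t))) - (x / (2 * Real.sqrt (ε * t))) ^ 3) *
        Real.exp (-(x / (2 * Real.sqrt (ε * t))) ^ 2) := by
  set r := Real.sqrt (ε * t) with hr
  have het : 0 < ε * t := mul_pos hε ht
  have hrpos : 0 < r := Real.sqrt_pos.mpr het
  have hr2 : r ^ 2 = ε * t := Real.sq_sqrt het.le
  have hrne : r ≠ 0 := hrpos.ne'
  set c : ℝ := 2 * r with hcdef
  have hc : c ≠ 0 := by positivity
  set C : ℝ := t ^ 2 * Real.exp (-b₀ * t) with hC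
  set sp : ℝ := Real.sqrt Real.pi with hsp
  have hspne : sp ≠ 0 := by
    rw [hsp]; positivity
  -- the derivative ladder
  set f1 : ℝ → ℝ := fun ξ => C * (2 / sp / c) * Real.exp (-(ξ / c) ^ 2) with hf1
  set f2 : ℝ → ℝ := fun ξ =>
    C * (2 / sp / c) * (-2 * ξ / c ^ 2) * Real.exp (-(ξ / c) ^ 2) with hf2
  set f3 : ℝ → ℝ := fun ξ =>
    C * (2 / sp / c) * (-2 / c ^ 2 + 4 * ξ ^ 2 / c ^ 4) * Real.exp (-(ξ / c) ^ 2) with hf3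
  set f4 : ℝ → ℝ := fun ξ =>
    C * (2 / sp / c) * (12 * ξ / c ^ 4 - 8 * ξ ^ 3 / c ^ 6) * Real.exp (-(ξ / c) ^ 2) with hf4
  have H0 : ∀ ξ : ℝ, HasDerivAt (fun ξ => s₂ ε b₀ ξ t) (f1 ξ) ξ := by
    intro ξ
    have herf : HasDerivAt (fun ξ : ℝ => erf (ξ / c))
        ((2 / sp * Real.exp (-(ξ / c) ^ 2)) * (1 / c)) ξ :=
      (hasDerivAt_erf' (ξ / c)).comp (h := fun ξ => ξ / c) ξ ((hasDerivAt_id ξ).div_const c)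
    have h := herf.const_mul C
    have heq : (fun ξ : ℝ => s₂ ε b₀ ξ t) = fun ξ => C * erf (ξ / c) := by
      funext ξ
      simp only [s₂, s, hC, hcdef, hr]
      ring
    rw [heq, hf1]
    refine h.congr_deriv ?_
    field_simp
  have H1 : ∀ ξ : ℝ, HasDerivAt f1 (f2 ξ) ξ := by
    intro ξ
    have h := (hd_exp c ξ hc).const_mul (C * (2 / sp / c))
    rw [hf1, hf2]
    refine h.congr_deriv ?_
    ring
  have H2 : ∀ ξ : ℝ, HasDerivAt f2 (f3 ξ) ξ := by
    intro ξ
    have hp : HasDerivAt (fun ξ : ℝ => C * (2 / sp / c) * (-2 * ξ / c ^ 2))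
        (C * (2 / sp / c) * (-2 / c ^ 2)) ξ := by
      have := ((hasDerivAt_id ξ).const_mul (-2 : ℝ)).div_const (c ^ 2) |>.const_mul
        (C * (2 / sp / c))
      simpa [mul_comm, mul_assoc] using this
    have h := hp.mul (hd_exp c ξ hc)
    rw [hf2, hf3]
    refine h.congr_deriv ?_
    field_simp
    ring
  have H3 : ∀ ξ : ℝ, HasDerivAt f3 (f4 ξ) ξ := by
    intro ξ
    have hp : HasDerivAt (fun ξ : ℝ => C * (2 / sp / c) * (-2 / c ^ 2 + 4 * ξ ^ 2 / c ^ 4))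
        (C * (2 / sp / c) * (8 * ξ / c ^ 4)) ξ := by
      have h1 : HasDerivAt (fun ξ : ℝ => -2 / c ^ 2 + 4 * ξ ^ 2 / c ^ 4)
          (8 * ξ / c ^ 4) ξ := by
        have := ((((hasDerivAt_id ξ).pow 2).const_mul (4 : ℝ)).div_const (c ^ 4)).const_add
          (-2 / c ^ 2)
        simp only [id_eq] at this
        refine this.congr_deriv ?_
        push_cast
        ring
      exact h1.const_mul _
    have h := hp.mul (hd_exp c ξ hc)
    rw [hf3, hf4]
    refine h.congr_deriv ?_
    field_simp
    ring
  have key : iteratedDeriv 4 (fun ξ => s₂ ε b₀ ξ t) = f4 := by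
    have e0 : deriv (fun ξ => s₂ ε b₀ ξ t) = f1 := funext fun ξ => (H0 ξ).deriv
    have e1 : deriv f1 = f2 := funext fun ξ => (H1 ξ).deriv
    have e2 : deriv f2 = f3 := funext fun ξ => (H2 ξ).deriv
    have e3 : deriv f3 = f4 := funext fun ξ => (H3 ξ).deriv
    show iteratedDeriv (3 + 1) _ = _
    rw [iteratedDeriv_succ]
    show deriv (iteratedDeriv (2 + 1) _) = _
    rw [iteratedDeriv_succ]
    show deriv (deriv (iteratedDeriv (1 + 1) _)) = _
    rw [iteratedDeriv_succ, iteratedDeriv_one, e0, e1, e2, e3]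
  rw [key]
  simp only [hf4]
  have hee : ε ^ 2 * t ^ 2 = r ^ 4 := by
    rw [show r ^ 4 = (r ^ 2) ^ 2 by ring, hr2]; ring
  have htne : t ≠ 0 := ht.ne'
  calc ε ^ 2 * (C * (2 / sp / c) * (12 * x / c ^ 4 - 8 * x ^ 3 / c ^ 6) *
        Real.exp (-(x / c) ^ 2))
      = (ε ^ 2 * t ^ 2) * (Real.exp (-b₀ * t) * (2 / sp / c) *
          (12 * x / c ^ 4 - 8 * x ^ 3 / c ^ 6) * Real.exp (-(x / c) ^ 2)) := by
        rw [hC]; ring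
    _ = r ^ 4 * (Real.exp (-b₀ * t) * (2 / sp / c) *
          (12 * x / c ^ 4 - 8 * x ^ 3 / c ^ 6) * Real.exp (-(x / c) ^ 2)) := by rw [hee]
    _ = Real.exp (-b₀ * t) / sp * (3 / 2 * (x / c) - (x / c) ^ 3) *
          Real.exp (-(x / c) ^ 2) := by
        rw [hcdef]
        field_simp
        ring
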